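/- Let ε > 0 and γ, θ > 0 and suppose N_# ≍ ε^{−γ₂ ε^{−γ₁ ε^{−d}−d} − γ₃ ε^{−d} − d} · log(ε^{−1}) · γ₄ for fixed positive constants γ₁, γ₂, γ₃, γ₄, d. Then log log N_# ≍ γ₁ ε^{−d} log(ε^{−1}) as ε → 0, and consequently ε ≍ (log log N_# / log log log N_#)^{−1/d} as N_# → ∞. -/

import Mathlib

/-!
Write t = log ε⁻¹, so that ε ^ (-x) = exp (x t) and the main term of `N_#` becomes
exp ((γ₂ e^{(γ₁ e^{dt} + d) t} + γ₃ e^{dt} + d) t) · t · γ₄. Each logarithm peels off one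
exponential, up to terms of lower order; this gives asymptotic equivalences
log N_# ~ γ₂ e^{(γ₁ e^{dt} + d) t} t, log log N_# ~ γ₁ e^{dt} t and log log log N_# ~ d t,
the constants c, C being absorbed by the first logarithm. Dividing the last two,
log log N_# / log log log N_# ~ (γ₁ / d) ε^{-d}, and raising to the power -1/d recovers ε up to
the factor (γ₁ / d)^{-1/d}, so no Lambert W inversion is needed.
-/

open Real Filter Topology Asymptotics

section Equivalent

variable {α : Type*} {l : Filter α}

theorem isEquivalent_log_of_mul_le_of_le_mul {f g : α → ℝ} {c C : ℝ} (hc : 0 < c)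
    (hfg : ∀ᶠ x in l, c * g x ≤ f x ∧ f x ≤ C * g x) (hg : Tendsto g l atTop) :
    (fun x => log (f x)) ~[l] fun x => log (g x) := by
  have hbdd : (fun x => log (f x) - log (g x)) =O[l] fun _ => (1 : ℝ) := by
    refine IsBigO.of_bound (max |log c| |log C|) ?_
    filter_upwards [hfg, hg.eventually_gt_atTop 0] with x ⟨hlo, hhi⟩ hgx
    have hfx : 0 < f x := (mul_pos hc hgx).trans_le hlo
    rw [← log_div hfx.ne' hgx.ne', norm_one, mul_one, norm_eq_abs, abs_le]
    constructor
    · calc -max |log c| |log C| ≤ log c := neg_le_of_abs_le (le_max_left _ _)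
        _ ≤ log (f x / g x) := log_le_log hc ((le_div_iff₀ hgx).2 hlo)
    · calc log (f x / g x) ≤ log C :=
            log_le_log (div_pos hfx hgx) ((div_le_iff₀ hgx).2 hhi)
        _ ≤ max |log c| |log C| := (le_abs_self _).trans (le_max_right _ _)
  exact (hbdd.trans_isLittleO ((isLittleO_one_left_iff ℝ).2
    (tendsto_norm_atTop_atTop.comp (tendsto_log_atTop.comp hg)))).isEquivalent

theorem Asymptotics.IsEquivalent.eventually_inv_two_mul_le_and_le_two_mul {u v : α → ℝ}
    (huv : u ~[l] v) (hv : ∀ᶠ x in l, 0 ≤ v x) :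
    ∀ᶠ x in l, 2⁻¹ * v x ≤ u x ∧ u x ≤ 2 * v x := by
  filter_upwards [huv.isLittleO.def (by norm_num : (0 : ℝ) < 2⁻¹), hv] with x hx hvx
  rw [Pi.sub_apply, norm_eq_abs, norm_eq_abs, abs_of_nonneg hvx, abs_le] at hx
  constructor <;> linarith [hx.1, hx.2]

theorem isEquivalent_div_rpow_neg_inv {u v τ : α → ℝ} {γ d : ℝ} (hγ : 0 ≤ γ) (hd : 0 < d)
    (hu : u ~[l] fun x => exp (d * τ x) * τ x * γ) (hv : v ~[l] fun x => d * τ x)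
    (hτ : ∀ᶠ x in l, τ x ≠ 0) :
    (fun x => (u x / v x) ^ (-(1 / d))) ~[l] fun x => (γ / d) ^ (-(1 / d)) * exp (-τ x) := by
  have hdiv : (fun x => u x / v x) ~[l] fun x => γ / d * exp (d * τ x) := by
    refine (hu.div hv).congr_right ?_
    filter_upwards [hτ] with x hx
    simp only [Pi.div_apply]
    field_simp
  refine (hdiv.rpow (fun x => by positivity)).congr_right (.of_forall fun x => ?_)
  rw [Pi.pow_apply, mul_rpow (by positivity) (exp_pos _).le, ← exp_mul]
  congr 2
  field_simp

end Equivalent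

theorem exists_forall_lt_of_eventually_nhdsGT_zero {P : ℝ → Prop}
    (h : ∀ᶠ ε in 𝓝[>] 0, P ε) : ∃ ε₁ > 0, ∀ ε, 0 < ε → ε < ε₁ → P ε := by
  obtain ⟨ε₁, hε₁, hsub⟩ := mem_nhdsGT_iff_exists_Ioo_subset.1 h
  exact ⟨ε₁, hε₁, fun ε h0 h1 => hsub ⟨h0, h1⟩⟩

theorem exists_forall_mul_le_and_le_mul_of_isEquivalent {u v : ℝ → ℝ}
    (huv : u ~[𝓝[>] 0] v) (hv : ∀ᶠ ε in 𝓝[>] 0, 0 ≤ v ε) :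
    ∃ c > (0 : ℝ), ∃ C > (0 : ℝ), ∃ ε₁ > (0 : ℝ), ∀ ε : ℝ, 0 < ε → ε < ε₁ →
      c * v ε ≤ u ε ∧ u ε ≤ C * v ε :=
  ⟨2⁻¹, by norm_num, 2, by norm_num, exists_forall_lt_of_eventually_nhdsGT_zero
    (huv.eventually_inv_two_mul_le_and_le_two_mul hv)⟩

theorem exists_forall_mul_le_self_and_self_le_mul_of_isEquivalent_const_mul {u : ℝ → ℝ}
    {k : ℝ} (hk : 0 < k) (hu : u ~[𝓝[>] 0] fun ε => k * ε) :
    ∃ c > (0 : ℝ), ∃ C > (0 : ℝ), ∃ ε₁ > (0 : ℝ), ∀ ε : ℝ, 0 < ε → ε < ε₁ →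
      c * u ε ≤ ε ∧ ε ≤ C * u ε := by
  refine ⟨(2 * k)⁻¹, by positivity, (2⁻¹ * k)⁻¹, by positivity,
    exists_forall_lt_of_eventually_nhdsGT_zero ?_⟩
  filter_upwards [hu.eventually_inv_two_mul_le_and_le_two_mul
    (eventually_mem_nhdsWithin.mono fun ε (hε : 0 < ε) => by positivity)] with ε ⟨hlo, hhi⟩
  constructor
  · rw [inv_mul_le_iff₀ (by positivity)]; linarith
  · rw [le_inv_mul_iff₀ (by positivity)]; linarith

theorem tendsto_exp_const_mul_atTop {d : ℝ} (hd : 0 < d) :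
    Tendsto (fun t => exp (d * t)) atTop atTop :=
  tendsto_exp_atTop.comp (tendsto_id.const_mul_atTop hd)

theorem tendsto_exp_mul_self_mul_self_mul_const {a : ℝ → ℝ} {k : ℝ} (hk : 0 < k)
    (ha : ∀ᶠ t in atTop, 0 ≤ a t) :
    Tendsto (fun t => exp (a t * t) * t * k) atTop atTop := by
  refine tendsto_atTop_mono' _ ?_ (tendsto_id.atTop_mul_const hk)
  filter_upwards [ha, eventually_ge_atTop 0] with t hat ht
  simp only [id]
  gcongr
  exact le_mul_of_one_le_left ht (one_le_exp (mul_nonneg hat ht))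

theorem isEquivalent_log_exp_mul_self_mul_self_mul_const {a : ℝ → ℝ} {k : ℝ} (hk : 0 < k)
    (ha : (fun _ => (1 : ℝ)) =O[atTop] a) :
    (fun t => log (exp (a t * t) * t * k)) ~[atTop] fun t => a t * t := by
  have hlog : (fun t => a t * t + (log t + log k)) =ᶠ[atTop]
      fun t => log (exp (a t * t) * t * k) := by
    filter_upwards [eventually_gt_atTop 0] with t ht
    rw [log_mul (by positivity) hk.ne', log_mul (exp_pos _).ne' ht.ne', log_exp]
    ring
  have hsmall : (fun t => log t + log k) =o[atTop] fun t => a t * t :=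
    (isLittleO_log_id_atTop.add (isLittleO_const_id_atTop (log k))).trans_isBigO
      (g := fun t => t) (by simpa using ha.mul (isBigO_refl (fun t : ℝ => t) atTop))
  exact (IsEquivalent.refl.add_isLittleO hsmall).congr_left hlog

theorem rpow_eq_exp_neg_mul_log_inv {ε : ℝ} (hε : 0 < ε) (y : ℝ) :
    ε ^ y = exp (-y * log ε⁻¹) := by
  rw [rpow_def_of_pos hε, log_inv]; ring_nf

/-- The main term of the hypothesis on `N_#`, in the variable `t = log ε⁻¹`. -/
noncomputable def expTower (γ₁ γ₂ γ₃ γ₄ d t : ℝ) : ℝ :=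
  exp ((γ₂ * exp ((γ₁ * exp (d * t) + d) * t) + γ₃ * exp (d * t) + d) * t) * t * γ₄

theorem rpow_tower_eq_expTower {ε : ℝ} (hε : 0 < ε) (γ₁ γ₂ γ₃ γ₄ d : ℝ) :
    ε ^ (-(γ₂ * ε ^ (-(γ₁ * ε ^ (-d)) - d)) - γ₃ * ε ^ (-d) - d) * log ε⁻¹ * γ₄ =
      expTower γ₁ γ₂ γ₃ γ₄ d (log ε⁻¹) := by
  simp only [rpow_eq_exp_neg_mul_log_inv hε, expTower]
  ring_nf

section Tower

variable {γ₁ γ₂ γ₃ γ₄ d : ℝ}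

theorem isEquivalent_log_expTower (h₁ : 0 < γ₁) (h₂ : 0 < γ₂) (h₄ : 0 < γ₄) (hd : 0 < d) :
    (fun t => log (expTower γ₁ γ₂ γ₃ γ₄ d t)) ~[atTop]
      fun t => exp ((γ₁ * exp (d * t) + d) * t) * t * γ₂ := by
  set Q := fun t => exp ((γ₁ * exp (d * t) + d) * t)
  have hBQ : (fun t => exp (d * t)) =o[atTop] Q := by
    refine isLittleO_exp_comp_exp_comp.2 ((((tendsto_exp_const_mul_atTop hd).const_mul_atTop
      h₁).atTop_mul_atTop₀ tendsto_id).congr fun t => ?_)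
    simp only [id]; ring
  have hQ : (fun _ => (1 : ℝ)) =o[atTop] Q :=
    ((isLittleO_one_left_iff ℝ).2 (tendsto_norm_atTop_atTop.comp
      (tendsto_exp_const_mul_atTop hd))).trans hBQ
  have hG : (fun t => γ₂ * Q t + γ₃ * exp (d * t) + d) ~[atTop] fun t => γ₂ * Q t := by
    refine (IsEquivalent.refl.add_isLittleO (w := fun t => γ₃ * exp (d * t) + d) ?_).congr_left
      (.of_forall fun t => ?_)
    · exact ((hBQ.const_mul_left γ₃).add (by simpa using hQ.const_mul_left d)).const_mul_right
        h₂.ne'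
    · simp only [Pi.add_apply]; ring
  have hG1 : (fun _ => (1 : ℝ)) =O[atTop] fun t => γ₂ * Q t + γ₃ * exp (d * t) + d :=
    (hQ.const_mul_right h₂.ne').isBigO.trans hG.isBigO_symm
  exact (isEquivalent_log_exp_mul_self_mul_self_mul_const h₄ hG1).trans
    ((hG.mul IsEquivalent.refl).congr_right
      (.of_forall fun t => by simp only [Pi.mul_apply]; ring))

theorem isEquivalent_log_exp_exp_add_mul (h₁ : 0 < γ₁) (h₂ : 0 < γ₂) (hd : 0 < d) :
    (fun t => log (exp ((γ₁ * exp (d * t) + d) * t) * t * γ₂)) ~[atTop]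
      fun t => exp (d * t) * t * γ₁ := by
  have hB : (fun _ => (1 : ℝ)) =o[atTop] fun t => γ₁ * exp (d * t) :=
    ((isLittleO_one_left_iff ℝ).2 (tendsto_norm_atTop_atTop.comp
      (tendsto_exp_const_mul_atTop hd))).const_mul_right h₁.ne'
  have ha : (fun t => γ₁ * exp (d * t) + d) ~[atTop] fun t => γ₁ * exp (d * t) :=
    IsEquivalent.refl.add_isLittleO (by simpa using hB.const_mul_left d)
  exact (isEquivalent_log_exp_mul_self_mul_self_mul_const h₂
    (hB.isBigO.trans ha.isBigO_symm)).trans ((ha.mul IsEquivalent.refl).congr_right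
      (.of_forall fun t => by simp only [Pi.mul_apply]; ring))

theorem tendsto_expTower (h₁ : 0 < γ₁) (h₂ : 0 < γ₂) (h₄ : 0 < γ₄) (hd : 0 < d) :
    Tendsto (expTower γ₁ γ₂ γ₃ γ₄ d) atTop atTop := by
  refine tendsto_atTop_mono' _ ?_
    ((isEquivalent_log_expTower (γ₃ := γ₃) h₁ h₂ h₄ hd).symm.tendsto_atTop
      (tendsto_exp_mul_self_mul_self_mul_const h₂ (.of_forall fun t => by positivity)))
  filter_upwards [eventually_gt_atTop 0] with t ht
  exact log_le_self (by unfold expTower; positivity)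

theorem isEquivalent_log_log_of_expTower_bounds {α : Type*} {l : Filter α} {τ : α → ℝ}
    (hτ : Tendsto τ l atTop) {f : α → ℝ} {c C : ℝ} (hc : 0 < c)
    (hf : ∀ᶠ x in l, c * expTower γ₁ γ₂ γ₃ γ₄ d (τ x) ≤ f x ∧
      f x ≤ C * expTower γ₁ γ₂ γ₃ γ₄ d (τ x))
    (h₁ : 0 < γ₁) (h₂ : 0 < γ₂) (h₄ : 0 < γ₄) (hd : 0 < d) :
    (fun x => log (log (f x))) ~[l] fun x => exp (d * τ x) * τ x * γ₁ := by
  have hlog : (fun x => log (f x)) ~[l]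
      fun x => exp ((γ₁ * exp (d * τ x) + d) * τ x) * τ x * γ₂ :=
    (isEquivalent_log_of_mul_le_of_le_mul hc hf ((tendsto_expTower h₁ h₂ h₄ hd).comp hτ)).trans
      ((isEquivalent_log_expTower h₁ h₂ h₄ hd).comp_tendsto hτ)
  exact (hlog.log ((tendsto_exp_mul_self_mul_self_mul_const
    (a := fun t => γ₁ * exp (d * t) + d) h₂ (.of_forall fun t => by positivity)).comp hτ)).trans
    ((isEquivalent_log_exp_exp_add_mul h₁ h₂ hd).comp_tendsto hτ)

theorem isEquivalent_log_log_log_of_expTower_bounds {α : Type*} {l : Filter α} {τ : α → ℝ}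
    (hτ : Tendsto τ l atTop) {f : α → ℝ} {c C : ℝ} (hc : 0 < c)
    (hf : ∀ᶠ x in l, c * expTower γ₁ γ₂ γ₃ γ₄ d (τ x) ≤ f x ∧
      f x ≤ C * expTower γ₁ γ₂ γ₃ γ₄ d (τ x))
    (h₁ : 0 < γ₁) (h₂ : 0 < γ₂) (h₄ : 0 < γ₄) (hd : 0 < d) :
    (fun x => log (log (log (f x)))) ~[l] fun x => d * τ x :=
  ((isEquivalent_log_log_of_expTower_bounds hτ hc hf h₁ h₂ h₄ hd).log
    ((tendsto_exp_mul_self_mul_self_mul_const h₁ (.of_forall fun _ => hd.le)).comp hτ)).trans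
    ((isEquivalent_log_exp_mul_self_mul_self_mul_const h₁
      (isBigO_const_const 1 hd.ne' atTop)).comp_tendsto hτ)

end Tower

theorem stmt17_general (γ₁ γ₂ γ₃ γ₄ d : ℝ)
    (h₁ : 0 < γ₁) (h₂ : 0 < γ₂) (h₄ : 0 < γ₄) (hd : 0 < d)
    (Nh : ℝ → ℝ) (c C : ℝ) (hc : 0 < c)
    (hN : ∃ ε₀ > (0 : ℝ), ∀ ε : ℝ, 0 < ε → ε < ε₀ →
      c * (ε ^ (-(γ₂ * ε ^ (-(γ₁ * ε ^ (-d)) - d)) - γ₃ * ε ^ (-d) - d) *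
          Real.log ε⁻¹ * γ₄) ≤ Nh ε ∧
      Nh ε ≤ C * (ε ^ (-(γ₂ * ε ^ (-(γ₁ * ε ^ (-d)) - d)) - γ₃ * ε ^ (-d) - d) *
          Real.log ε⁻¹ * γ₄)) :
    (∃ c₁ > (0 : ℝ), ∃ C₁ > (0 : ℝ), ∃ ε₁ > (0 : ℝ), ∀ ε : ℝ, 0 < ε → ε < ε₁ →
      c₁ * (γ₁ * ε ^ (-d) * Real.log ε⁻¹) ≤ Real.log (Real.log (Nh ε)) ∧
      Real.log (Real.log (Nh ε)) ≤ C₁ * (γ₁ * ε ^ (-d) * Real.log ε⁻¹)) ∧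
    (∃ c₂ > (0 : ℝ), ∃ C₂ > (0 : ℝ), ∃ ε₂ > (0 : ℝ), ∀ ε : ℝ, 0 < ε → ε < ε₂ →
      c₂ * (Real.log (Real.log (Nh ε)) /
          Real.log (Real.log (Real.log (Nh ε)))) ^ (-(1 / d)) ≤ ε ∧
      ε ≤ C₂ * (Real.log (Real.log (Nh ε)) /
          Real.log (Real.log (Real.log (Nh ε)))) ^ (-(1 / d))) := by
  obtain ⟨ε₀, hε₀, hbound⟩ := hN
  have hτ : Tendsto (fun ε : ℝ => log ε⁻¹) (𝓝[>] 0) atTop :=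
    tendsto_log_atTop.comp tendsto_inv_nhdsGT_zero
  have hNh : ∀ᶠ ε in 𝓝[>] 0, c * expTower γ₁ γ₂ γ₃ γ₄ d (log ε⁻¹) ≤ Nh ε ∧
      Nh ε ≤ C * expTower γ₁ γ₂ γ₃ γ₄ d (log ε⁻¹) := by
    filter_upwards [Ioo_mem_nhdsGT hε₀] with ε ⟨hε, hεε₀⟩
    simpa only [rpow_tower_eq_expTower hε] using hbound ε hε hεε₀
  have hloglog := isEquivalent_log_log_of_expTower_bounds hτ hc hNh h₁ h₂ h₄ hd
  have hlogloglog := isEquivalent_log_log_log_of_expTower_bounds hτ hc hNh h₁ h₂ h₄ hd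
  refine ⟨exists_forall_mul_le_and_le_mul_of_isEquivalent (hloglog.congr_right ?_) ?_,
    exists_forall_mul_le_self_and_self_le_mul_of_isEquivalent_const_mul
      (k := (γ₁ / d) ^ (-(1 / d))) (by positivity)
      ((isEquivalent_div_rpow_neg_inv h₁.le hd hloglog hlogloglog
        (hτ.eventually_ne_atTop 0)).congr_right ?_)⟩
  · filter_upwards [self_mem_nhdsWithin] with ε (hε : 0 < ε)
    rw [rpow_eq_exp_neg_mul_log_inv hε, neg_neg]; ring
  · filter_upwards [Ioo_mem_nhdsGT one_pos] with ε ⟨hε, hε1⟩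
    have : 0 ≤ log ε⁻¹ := log_nonneg (one_le_inv_iff₀.2 ⟨hε, hε1.le⟩)
    positivity
  · filter_upwards [self_mem_nhdsWithin] with ε (hε : 0 < ε)
    rw [log_inv, neg_neg, exp_log hε]

theorem stmt17 (γ₁ γ₂ γ₃ γ₄ d : ℝ)
    (h₁ : 0 < γ₁) (h₂ : 0 < γ₂) (h₃ : 0 < γ₃) (h₄ : 0 < γ₄) (hd : 0 < d)
    (Nh : ℝ → ℝ) (c C : ℝ) (hc : 0 < c) (hcC : c ≤ C)
    (hN : ∃ ε₀ > (0 : ℝ), ∀ ε : ℝ, 0 < ε → ε < ε₀ →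
      c * (ε ^ (-(γ₂ * ε ^ (-(γ₁ * ε ^ (-d)) - d)) - γ₃ * ε ^ (-d) - d) *
          Real.log ε⁻¹ * γ₄) ≤ Nh ε ∧
      Nh ε ≤ C * (ε ^ (-(γ₂ * ε ^ (-(γ₁ * ε ^ (-d)) - d)) - γ₃ * ε ^ (-d) - d) *
          Real.log ε⁻¹ * γ₄)) :
    (∃ c₁ > (0 : ℝ), ∃ C₁ > (0 : ℝ), ∃ ε₁ > (0 : ℝ), ∀ ε : ℝ, 0 < ε → ε < ε₁ →
      c₁ * (γ₁ * ε ^ (-d) * Real.log ε⁻¹) ≤ Real.log (Real.log (Nh ε)) ∧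
      Real.log (Real.log (Nh ε)) ≤ C₁ * (γ₁ * ε ^ (-d) * Real.log ε⁻¹)) ∧
    (∃ c₂ > (0 : ℝ), ∃ C₂ > (0 : ℝ), ∃ ε₂ > (0 : ℝ), ∀ ε : ℝ, 0 < ε → ε < ε₂ →
      c₂ * (Real.log (Real.log (Nh ε)) /
          Real.log (Real.log (Real.log (Nh ε)))) ^ (-(1 / d)) ≤ ε ∧
      ε ≤ C₂ * (Real.log (Real.log (Nh ε)) /
          Real.log (Real.log (Real.log (Nh ε)))) ^ (-(1 / d))) :=
  stmt17_general γ₁ γ₂ γ₃ γ₄ d h₁ h₂ h₄ hd Nh c C hc hN
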